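/- arXiv:2202.07478 — 6 statements merged into one kernel-verified Lean document; each statement's English description precedes it below -/
import Mathlib

section
/- Suppose M₁ ∈ C¹([0,T], S_d(ℝ)), M₂ ∈ C¹([0,T], M_{d,r}(ℝ)), M₃ ∈ C¹([0,T], S_r(ℝ)) satisfy the coupled matrix ODE system: M₁′(t) = −¼(M₂(t) − B(t)ᵀ)A(t)⁻¹(M₂(t)ᵀ − B(t)) + C(t) − R(t)ᵀM₁(t) − M₁(t)R(t) + 2ρ·M₁(t)Σ(t)M₁(t); M₂′(t) = −(M₂(t) − B(t)ᵀ)A(t)⁻¹M₃(t) − R(t)ᵀM₂(t) + 2ρ·M₁(t)Σ(t)M₂(t); M₃′(t) = −M₃(t)A(t)⁻¹M₃(t) + (ρ/2)·M₂(t)ᵀΣ(t)M₂(t), with terminal conditions M₁(T) = −Ψ, M₂(T) = −Υ, M₃(T) = −Γ. Define M₆(t) = ∫_t^T Tr(Σ(s)M₁(s)) ds and θ(t,x,y) = xᵀM₁(t)x + xᵀM₂(t)y + yᵀM₃(t)y + M₆(t). Then for every (t,x,y) ∈ [0,T]×ℝ^d×ℝ^r, θ satisfies the partial differential equation 0 =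 ∂ₜθ + ¼(∇_yθ − B(t)x)ᵀA(t)⁻¹(∇_yθ − B(t)x) − xᵀC(t)x + xᵀR(t)ᵀ∇ₓθ + ½Tr(Σ(t)·D²ₓₓθ) − (ρ/2)(∇ₓθ)ᵀΣ(t)∇ₓθ, together with the terminal condition θ(T,x,y) = −(xᵀΨx + xᵀΥy + yᵀΓy). -/
/-! Plugging the ansatz into the PDE gives `∇ₓθ = 2M₁x + M₂y`, `∇_yθ = M₂ᵀx + 2M₃y`,
`D²ₓₓθ = 2M₁`, and, by the fundamental theorem of calculus for `M₆`, `∂ₜθ` is the quadratic form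
of the Riccati right-hand sides minus `Tr(ΣM₁)`. The PDE is then a polynomial identity in `(x, y)`:
the `A⁻¹`-terms of the Riccati system are exactly what completing the square in
`¼(∇_yθ − Bx)ᵀA⁻¹(∇_yθ − Bx)` produces, the `R`- and `Σ`-terms cancel against the drift and the
gradient penalty in the same way, and `½Tr(Σ·2M₁)` cancels `M₆′ = −Tr(ΣM₁)`. -/

open Matrix Set intervalIntegral

noncomputable section

variable {d r : ℕ}

/-- Partial derivative in time of `θ(t,x,y)` along `[0,T]`. -/
def ptime (T : ℝ) (θ : ℝ → (Fin d → ℝ) → (Fin r → ℝ) → ℝ)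
    (t : ℝ) (x : Fin d → ℝ) (y : Fin r → ℝ) : ℝ :=
  derivWithin (fun τ => θ τ x y) (Icc 0 T) t

/-- Gradient of `θ(t,x,y)` in `x` (vector of partial derivatives). -/
def gradX (θ : ℝ → (Fin d → ℝ) → (Fin r → ℝ) → ℝ)
    (t : ℝ) (x : Fin d → ℝ) (y : Fin r → ℝ) : Fin d → ℝ :=
  fun i => deriv (fun s => θ t (Function.update x i s) y) (x i)

/-- Gradient of `θ(t,x,y)` in `y` (vector of partial derivatives). -/
def gradY (θ : ℝ → (Fin d → ℝ) → (Fin r → ℝ) → ℝ)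
    (t : ℝ) (x : Fin d → ℝ) (y : Fin r → ℝ) : Fin r → ℝ :=
  fun j => deriv (fun s => θ t x (Function.update y j s)) (y j)

/-- Hessian of `θ(t,x,y)` in `x` (matrix of second partial derivatives). -/
def hessX (θ : ℝ → (Fin d → ℝ) → (Fin r → ℝ) → ℝ)
    (t : ℝ) (x : Fin d → ℝ) (y : Fin r → ℝ) : Matrix (Fin d) (Fin d) ℝ :=
  fun i j => deriv (fun s => gradX θ t (Function.update x j s) y i) (x j)

/-- The quadratic ansatz `θ(t,x,y) = xᵀM₁(t)x + xᵀM₂(t)y + yᵀM₃(t)y + M₆(t)` with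
`M₆(t) = ∫_t^T Tr(Σ(s)M₁(s)) ds`. -/
def thetaAnsatz (T : ℝ) (M₁ : ℝ → Matrix (Fin d) (Fin d) ℝ)
    (M₂ : ℝ → Matrix (Fin d) (Fin r) ℝ) (M₃ : ℝ → Matrix (Fin r) (Fin r) ℝ)
    (Sg : ℝ → Matrix (Fin d) (Fin d) ℝ)
    (t : ℝ) (x : Fin d → ℝ) (y : Fin r → ℝ) : ℝ :=
  x ⬝ᵥ (M₁ t).mulVec x + x ⬝ᵥ (M₂ t).mulVec y + y ⬝ᵥ (M₃ t).mulVec y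
    + ∫ s in t..T, (Sg s * M₁ s).trace

section Calculus

variable {𝕜 ι κ : Type*} [NontriviallyNormedField 𝕜] [Fintype ι] [Fintype κ]

theorem HasDerivAt.const_mulVec [CompleteSpace 𝕜] {v : 𝕜 → κ → 𝕜} {v' : κ → 𝕜} {s : 𝕜}
    (M : Matrix ι κ 𝕜) (hv : HasDerivAt v v' s) :
    HasDerivAt (fun s => M *ᵥ v s) (M *ᵥ v') s :=
  M.mulVecLin.toContinuousLinearMap.hasFDerivAt.comp_hasDerivAt s hv

theorem HasDerivAt.dotProduct {u w : 𝕜 → ι → 𝕜} {u' w' : ι → 𝕜} {s : 𝕜}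
    (hu : HasDerivAt u u' s) (hw : HasDerivAt w w' s) :
    HasDerivAt (fun s => u s ⬝ᵥ w s) (u' ⬝ᵥ w s + u s ⬝ᵥ w') s := by
  have := HasDerivAt.fun_sum fun i (_ : i ∈ Finset.univ) =>
    (hasDerivAt_pi.1 hu i).fun_mul (hasDerivAt_pi.1 hw i)
  simpa only [_root_.dotProduct, Finset.sum_add_distrib] using this

theorem hasDerivWithinAt_dotProduct_mulVec_of_entries {M : 𝕜 → Matrix ι κ 𝕜}
    {D : Matrix ι κ 𝕜} {s : Set 𝕜} {t : 𝕜} (a : ι → 𝕜) (b : κ → 𝕜)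
    (h : ∀ i j, HasDerivWithinAt (fun τ => M τ i j) (D i j) s t) :
    HasDerivWithinAt (fun τ => a ⬝ᵥ M τ *ᵥ b) (a ⬝ᵥ D *ᵥ b) s t := by
  have := HasDerivWithinAt.fun_sum fun i (_ : i ∈ Finset.univ) =>
    (HasDerivWithinAt.fun_sum fun j (_ : j ∈ Finset.univ) =>
      (h i j).mul_const (b j)).const_mul (a i)
  simpa only [dotProduct, mulVec, Finset.mul_sum] using this

theorem hasDerivWithinAt_integral_Icc_left {E : Type*} [NormedAddCommGroup E] [NormedSpace ℝ E]
    [CompleteSpace E] {f : ℝ → E} {a b t : ℝ} (hf : ContinuousOn f (Icc a b))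
    (ht : t ∈ Icc a b) :
    HasDerivWithinAt (fun τ => ∫ σ in τ..b, f σ) (-f t) (Icc a b) t := by
  have : Fact (t ∈ Icc a b) := ⟨ht⟩
  refine integral_hasDerivWithinAt_left ?_ ?_ (hf t ht)
  · exact (hf.mono (by rw [uIcc_of_le ht.2]; exact Icc_subset_Icc_left ht.1)).intervalIntegrable
  · exact ⟨Icc a b, self_mem_nhdsWithin, hf.aestronglyMeasurable measurableSet_Icc⟩

end Calculus

section QuadraticForms

variable {R : Type*} [CommRing R] {l m n k : Type*} [Fintype l] [Fintype m] [Fintype n]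

theorem dotProduct_transpose_mul_mul_mulVec [Fintype k] (P : Matrix l m R) (M : Matrix l k R)
    (Q : Matrix k n R) (u : m → R) (v : n → R) :
    u ⬝ᵥ (Pᵀ * M * Q) *ᵥ v = P *ᵥ u ⬝ᵥ M *ᵥ (Q *ᵥ v) := by
  rw [← mulVec_mulVec, ← mulVec_mulVec, dotProduct_mulVec, vecMul_transpose]

theorem Matrix.IsSymm.dotProduct_mulVec_comm {P : Matrix n n R} (hP : P.IsSymm) (u v : n → R) :
    u ⬝ᵥ P *ᵥ v = v ⬝ᵥ P *ᵥ u := by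
  rw [← dotProduct_transpose_mulVec, hP.eq]

theorem Matrix.IsSymm.add_dotProduct_mulVec_add {P : Matrix n n R} (hP : P.IsSymm)
    (u v : n → R) :
    (u + v) ⬝ᵥ P *ᵥ (u + v) = u ⬝ᵥ P *ᵥ u + 2 * (u ⬝ᵥ P *ᵥ v) + v ⬝ᵥ P *ᵥ v := by
  rw [mulVec_add, dotProduct_add, add_dotProduct, add_dotProduct, hP.dotProduct_mulVec_comm v u]
  ring

end QuadraticForms

-- `P` plays the role of `A⁻¹` and `S` that of `Σ`.
theorem riccati_hjb_residual {K : Type*} [Field K] [CharZero K] {m n : Type*} [Fintype m]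
    [Fintype n] (ρ : K) {M₁ S : Matrix m m K} {M₃ P : Matrix n n K} (M₂ : Matrix m n K)
    (B : Matrix n m K) (C R : Matrix m m K) (hM₁ : M₁.IsSymm) (hM₃ : M₃.IsSymm)
    (hP : P.IsSymm) (hS : S.IsSymm) (x : m → K) (y : n → K) :
    x ⬝ᵥ (-((1/4 : K) • ((M₂ - Bᵀ) * P * (M₂ᵀ - B))) + C - Rᵀ * M₁ - M₁ * R
          + (2 * ρ) • (M₁ * S * M₁)) *ᵥ x
      + x ⬝ᵥ (-((M₂ - Bᵀ) * P * M₃) - Rᵀ * M₂ + (2 * ρ) • (M₁ * S * M₂)) *ᵥ y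
      + y ⬝ᵥ (-(M₃ * P * M₃) + (ρ / 2) • (M₂ᵀ * S * M₂)) *ᵥ y - (S * M₁).trace
      + (1/4 : K) * ((M₂ᵀ *ᵥ x + (M₃ + M₃ᵀ) *ᵥ y - B *ᵥ x) ⬝ᵥ
          P *ᵥ (M₂ᵀ *ᵥ x + (M₃ + M₃ᵀ) *ᵥ y - B *ᵥ x))
      - x ⬝ᵥ C *ᵥ x
      + x ⬝ᵥ Rᵀ *ᵥ ((M₁ + M₁ᵀ) *ᵥ x + M₂ *ᵥ y)
      + (1/2 : K) * (S * (M₁ + M₁ᵀ)).trace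
      - (ρ / 2) * (((M₁ + M₁ᵀ) *ᵥ x + M₂ *ᵥ y) ⬝ᵥ S *ᵥ ((M₁ + M₁ᵀ) *ᵥ x + M₂ *ᵥ y)) = 0 := by
  rw [hM₁.eq, hM₃.eq]
  have square : (M₂ᵀ *ᵥ x + (M₃ + M₃) *ᵥ y - B *ᵥ x) ⬝ᵥ P *ᵥ (M₂ᵀ *ᵥ x + (M₃ + M₃) *ᵥ y - B *ᵥ x)
      = x ⬝ᵥ ((M₂ - Bᵀ) * P * (M₂ᵀ - B)) *ᵥ x + 4 * (x ⬝ᵥ ((M₂ - Bᵀ) * P * M₃) *ᵥ y)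
        + 4 * (y ⬝ᵥ (M₃ * P * M₃) *ᵥ y) := by
    have : M₂ᵀ *ᵥ x + (M₃ + M₃) *ᵥ y - B *ᵥ x = (M₂ᵀ - B) *ᵥ x + (2 : K) • (M₃ *ᵥ y) := by
      rw [sub_mulVec, add_mulVec, two_smul]; abel
    rw [this, hP.add_dotProduct_mulVec_add]
    simp only [mulVec_smul, dotProduct_smul, smul_dotProduct, smul_eq_mul,
      ← dotProduct_transpose_mul_mul_mulVec, transpose_sub, transpose_transpose, hM₃.eq]
    ring
  have drift : x ⬝ᵥ Rᵀ *ᵥ ((M₁ + M₁) *ᵥ x + M₂ *ᵥ y)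
      = x ⬝ᵥ (Rᵀ * M₁ + M₁ * R) *ᵥ x + x ⬝ᵥ (Rᵀ * M₂) *ᵥ y := by
    have : x ⬝ᵥ (M₁ * R) *ᵥ x = x ⬝ᵥ (Rᵀ * M₁) *ᵥ x := by
      rw [← dotProduct_transpose_mulVec, transpose_mul, hM₁.eq]
    simp only [add_mulVec, mulVec_add, dotProduct_add, mulVec_mulVec, this]
  have noise : ((M₁ + M₁) *ᵥ x + M₂ *ᵥ y) ⬝ᵥ S *ᵥ ((M₁ + M₁) *ᵥ x + M₂ *ᵥ y)
      = 4 * (x ⬝ᵥ (M₁ * S * M₁) *ᵥ x) + 4 * (x ⬝ᵥ (M₁ * S * M₂) *ᵥ y)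
        + y ⬝ᵥ (M₂ᵀ * S * M₂) *ᵥ y := by
    rw [add_mulVec, ← two_smul K (M₁ *ᵥ x), hS.add_dotProduct_mulVec_add]
    simp only [mulVec_smul, dotProduct_smul, smul_dotProduct, smul_eq_mul,
      ← dotProduct_transpose_mul_mul_mulVec, hM₁.eq]
    ring
  have trace : (S * (M₁ + M₁)).trace = 2 * (S * M₁).trace := by
    rw [Matrix.mul_add, trace_add, two_mul]
  simp only [add_mulVec, sub_mulVec, neg_mulVec, smul_mulVec, dotProduct_add, dotProduct_sub,
    dotProduct_neg, dotProduct_smul, smul_eq_mul, add_dotProduct, sub_dotProduct, mulVec_add,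
    mulVec_sub] at square drift noise ⊢
  linear_combination (1/4 : K) * square + drift - (ρ / 2) * noise + (1/2 : K) * trace

section Ansatz

variable {d r : ℕ} (T : ℝ) (M₁ : ℝ → Matrix (Fin d) (Fin d) ℝ) (M₂ : ℝ → Matrix (Fin d) (Fin r) ℝ)
  (M₃ : ℝ → Matrix (Fin r) (Fin r) ℝ) (Sg : ℝ → Matrix (Fin d) (Fin d) ℝ)
  (t : ℝ) (x : Fin d → ℝ) (y : Fin r → ℝ)

theorem gradX_thetaAnsatz :
    gradX (thetaAnsatz T M₁ M₂ M₃ Sg) t x y = (M₁ t + (M₁ t)ᵀ) *ᵥ x + M₂ t *ᵥ y := by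
  funext i
  have hx := hasDerivAt_update x i (x i)
  have h := (((hx.dotProduct (hx.const_mulVec (M₁ t))).add
    (hx.dotProduct (hasDerivAt_const (x i) (M₂ t *ᵥ y)))).add_const
    (y ⬝ᵥ M₃ t *ᵥ y)).add_const (∫ s in t..T, (Sg s * M₁ s).trace)
  refine h.deriv.trans ?_
  simp [add_mulVec, dotProduct_mulVec, mulVec_transpose]
  rfl

theorem gradY_thetaAnsatz :
    gradY (thetaAnsatz T M₁ M₂ M₃ Sg) t x y = (M₂ t)ᵀ *ᵥ x + (M₃ t + (M₃ t)ᵀ) *ᵥ y := by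
  funext j
  have hy := hasDerivAt_update y j (y j)
  have h := ((((hasDerivAt_const (y j) (x ⬝ᵥ M₁ t *ᵥ x)).add
    ((hasDerivAt_const (y j) x).dotProduct (hy.const_mulVec (M₂ t)))).add
    (hy.dotProduct (hy.const_mulVec (M₃ t)))).add_const (∫ s in t..T, (Sg s * M₁ s).trace))
  refine h.deriv.trans ?_
  simp [add_mulVec, dotProduct_mulVec, mulVec_transpose]
  rfl

theorem hessX_thetaAnsatz :
    hessX (thetaAnsatz T M₁ M₂ M₃ Sg) t x y = M₁ t + (M₁ t)ᵀ := by
  funext i j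
  have h := hasDerivAt_pi.1 (((hasDerivAt_update x j (x j)).const_mulVec
    (M₁ t + (M₁ t)ᵀ)).add_const (M₂ t *ᵥ y)) i
  simp only [hessX, gradX_thetaAnsatz]
  refine h.deriv.trans ?_
  simp

theorem thetaAnsatz_self :
    thetaAnsatz T M₁ M₂ M₃ Sg T x y = x ⬝ᵥ M₁ T *ᵥ x + x ⬝ᵥ M₂ T *ᵥ y + y ⬝ᵥ M₃ T *ᵥ y := by
  simp [thetaAnsatz]

variable {T M₁ M₂ M₃ Sg t}

theorem ptime_thetaAnsatz (hT : 0 < T) (ht : t ∈ Icc 0 T)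
    (hSg : ContinuousOn Sg (Icc 0 T)) (hM₁c : ContinuousOn M₁ (Icc 0 T))
    {D₁ : Matrix (Fin d) (Fin d) ℝ} {D₂ : Matrix (Fin d) (Fin r) ℝ} {D₃ : Matrix (Fin r) (Fin r) ℝ}
    (hM₁ : ∀ i j, HasDerivWithinAt (fun τ => M₁ τ i j) (D₁ i j) (Icc 0 T) t)
    (hM₂ : ∀ i j, HasDerivWithinAt (fun τ => M₂ τ i j) (D₂ i j) (Icc 0 T) t)
    (hM₃ : ∀ i j, HasDerivWithinAt (fun τ => M₃ τ i j) (D₃ i j) (Icc 0 T) t) :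
    ptime T (thetaAnsatz T M₁ M₂ M₃ Sg) t x y
      = x ⬝ᵥ D₁ *ᵥ x + x ⬝ᵥ D₂ *ᵥ y + y ⬝ᵥ D₃ *ᵥ y - (Sg t * M₁ t).trace := by
  have hint := hasDerivWithinAt_integral_Icc_left (f := fun τ => (Sg τ * M₁ τ).trace)
    (by fun_prop) ht
  exact ((((hasDerivWithinAt_dotProduct_mulVec_of_entries x x hM₁).add
    (hasDerivWithinAt_dotProduct_mulVec_of_entries x y hM₂)).add
    (hasDerivWithinAt_dotProduct_mulVec_of_entries y y hM₃)).add hint).derivWithin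
    (uniqueDiffOn_Icc hT t ht)

end Ansatz

theorem quadratic_ansatz_solves_pde_general
    (d r : ℕ)
    (T ρ : ℝ) (hT : 0 < T)
    (U₁₁ : ℝ → Matrix (Fin d) (Fin d) ℝ)
    (U₂₂ : ℝ → Matrix (Fin r) (Fin r) ℝ)
    (Ψ : Matrix (Fin d) (Fin d) ℝ) (Γ : Matrix (Fin r) (Fin r) ℝ)
    (Υ : Matrix (Fin d) (Fin r) ℝ)
    (hU₁₁c : ContinuousOn U₁₁ (Icc 0 T)) (hU₁₁ : ∀ t ∈ Icc (0:ℝ) T, (U₁₁ t).PosSemidef)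
    (hU₂₂ : ∀ t ∈ Icc (0:ℝ) T, (U₂₂ t).PosDef)
    -- the change of variables
    (A : ℝ → Matrix (Fin r) (Fin r) ℝ) (hA : ∀ t, A t = (U₂₂ t)⁻¹)
    (B : ℝ → Matrix (Fin r) (Fin d) ℝ)
    (C : ℝ → Matrix (Fin d) (Fin d) ℝ)
    (R : ℝ → Matrix (Fin d) (Fin d) ℝ)
    (Sg : ℝ → Matrix (Fin d) (Fin d) ℝ) (hSg : ∀ t, Sg t = (1/2 : ℝ) • U₁₁ t)
    -- `(M₁, M₂, M₃)` is a C¹ solution of the Riccati ODE system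
    (M₁ : ℝ → Matrix (Fin d) (Fin d) ℝ) (M₂ : ℝ → Matrix (Fin d) (Fin r) ℝ)
    (M₃ : ℝ → Matrix (Fin r) (Fin r) ℝ)
    (hM₁s : ∀ t ∈ Icc (0:ℝ) T, (M₁ t).IsSymm) (hM₃s : ∀ t ∈ Icc (0:ℝ) T, (M₃ t).IsSymm)
    (hM₁ode : ∀ t ∈ Icc (0:ℝ) T, ∀ i j,
      HasDerivWithinAt (fun τ => M₁ τ i j)
        ((-((1/4 : ℝ) • ((M₂ t - (B t)ᵀ) * (A t)⁻¹ * ((M₂ t)ᵀ - B t))) + C t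
          - (R t)ᵀ * M₁ t - M₁ t * R t + (2 * ρ) • (M₁ t * Sg t * M₁ t)) i j)
        (Icc (0:ℝ) T) t)
    (hM₂ode : ∀ t ∈ Icc (0:ℝ) T, ∀ i j,
      HasDerivWithinAt (fun τ => M₂ τ i j)
        ((-((M₂ t - (B t)ᵀ) * (A t)⁻¹ * M₃ t) - (R t)ᵀ * M₂ t
          + (2 * ρ) • (M₁ t * Sg t * M₂ t)) i j)
        (Icc (0:ℝ) T) t)
    (hM₃ode : ∀ t ∈ Icc (0:ℝ) T, ∀ i j,
      HasDerivWithinAt (fun τ => M₃ τ i j)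
        ((-(M₃ t * (A t)⁻¹ * M₃ t) + (ρ / 2) • ((M₂ t)ᵀ * Sg t * M₂ t)) i j)
        (Icc (0:ℝ) T) t)
    (hM₁T : M₁ T = -Ψ) (hM₂T : M₂ T = -Υ) (hM₃T : M₃ T = -Γ) :
    (∀ t ∈ Icc (0:ℝ) T, ∀ (x : Fin d → ℝ) (y : Fin r → ℝ),
      0 = ptime T (thetaAnsatz T M₁ M₂ M₃ Sg) t x y
        + (1/4 : ℝ) * ((gradY (thetaAnsatz T M₁ M₂ M₃ Sg) t x y - (B t).mulVec x) ⬝ᵥ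
            (A t)⁻¹.mulVec (gradY (thetaAnsatz T M₁ M₂ M₃ Sg) t x y - (B t).mulVec x))
        - x ⬝ᵥ (C t).mulVec x
        + x ⬝ᵥ (R t)ᵀ.mulVec (gradX (thetaAnsatz T M₁ M₂ M₃ Sg) t x y)
        + (1/2 : ℝ) * (Sg t * hessX (thetaAnsatz T M₁ M₂ M₃ Sg) t x y).trace
        - (ρ / 2) * (gradX (thetaAnsatz T M₁ M₂ M₃ Sg) t x y ⬝ᵥ
            (Sg t).mulVec (gradX (thetaAnsatz T M₁ M₂ M₃ Sg) t x y))) ∧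
    (∀ (x : Fin d → ℝ) (y : Fin r → ℝ),
      thetaAnsatz T M₁ M₂ M₃ Sg T x y
        = -(x ⬝ᵥ Ψ.mulVec x + x ⬝ᵥ Υ.mulVec y + y ⬝ᵥ Γ.mulVec y)) := by
  refine ⟨fun t ht x y => ?_, fun x y => ?_⟩
  · have hM₁c : ContinuousOn M₁ (Icc 0 T) := fun τ hτ =>
      continuousWithinAt_pi.2 fun i => continuousWithinAt_pi.2 fun j =>
        (hM₁ode τ hτ i j).continuousWithinAt
    have hSgc : ContinuousOn Sg (Icc 0 T) :=
      (hU₁₁c.const_smul (1/2 : ℝ)).congr fun τ _ => hSg τ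
    have hSgs : (Sg t).IsSymm :=
      hSg t ▸ (isHermitian_iff_isSymm.1 (hU₁₁ t ht).isHermitian).smul _
    have hAs : (A t)⁻¹.IsSymm :=
      hA t ▸ (isHermitian_iff_isSymm.1 (hU₂₂ t ht).isHermitian).inv.inv
    rw [ptime_thetaAnsatz x y hT ht hSgc hM₁c (hM₁ode t ht) (hM₂ode t ht) (hM₃ode t ht),
      gradX_thetaAnsatz, gradY_thetaAnsatz, hessX_thetaAnsatz]
    exact (riccati_hjb_residual ρ (M₂ t) (B t) (C t) (R t) (hM₁s t ht) (hM₃s t ht) hAs hSgs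
      x y).symm
  · rw [thetaAnsatz_self, hM₁T, hM₂T, hM₃T]
    simp only [neg_mulVec, dotProduct_neg, neg_add]

/-- **Theorem 1 (first part).** If `(M₁,M₂,M₃)` solve the Riccati ODE system with terminal
conditions `M₁(T) = -Ψ`, `M₂(T) = -Υ`, `M₃(T) = -Γ`, then the quadratic ansatz `θ` solves the
HJB-type PDE `0 = ∂ₜθ + ¼(∇_yθ − Bx)ᵀA⁻¹(∇_yθ − Bx) − xᵀCx + xᵀRᵀ∇ₓθ + ½Tr(Σ D²ₓₓθ)
− (ρ/2)(∇ₓθ)ᵀΣ∇ₓθ` with terminal condition `θ(T,x,y) = −(xᵀΨx + xᵀΥy + yᵀΓy)`. -/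
theorem quadratic_ansatz_solves_pde
    (d r : ℕ) (hd : 0 < d) (hr : 0 < r) (hrd : r ≤ d)
    (T ρ : ℝ) (hT : 0 < T) (hρ : 0 < ρ)
    (Q₁₁ Y₁₁ U₁₁ : ℝ → Matrix (Fin d) (Fin d) ℝ)
    (Y₂₁ : ℝ → Matrix (Fin r) (Fin d) ℝ)
    (U₂₂ : ℝ → Matrix (Fin r) (Fin r) ℝ)
    (Ψ : Matrix (Fin d) (Fin d) ℝ) (Γ : Matrix (Fin r) (Fin r) ℝ)
    (Υ : Matrix (Fin d) (Fin r) ℝ)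
    (hQ₁₁c : ContinuousOn Q₁₁ (Icc 0 T)) (hQ₁₁s : ∀ t ∈ Icc (0:ℝ) T, (Q₁₁ t).IsSymm)
    (hY₁₁c : ContinuousOn Y₁₁ (Icc 0 T))
    (hY₂₁c : ContinuousOn Y₂₁ (Icc 0 T))
    (hU₁₁c : ContinuousOn U₁₁ (Icc 0 T)) (hU₁₁ : ∀ t ∈ Icc (0:ℝ) T, (U₁₁ t).PosSemidef)
    (hU₂₂c : ContinuousOn U₂₂ (Icc 0 T)) (hU₂₂ : ∀ t ∈ Icc (0:ℝ) T, (U₂₂ t).PosDef)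
    (hΨ : Ψ.PosSemidef) (hΓ : Γ.IsSymm)
    -- the change of variables
    (A : ℝ → Matrix (Fin r) (Fin r) ℝ) (hA : ∀ t, A t = (U₂₂ t)⁻¹)
    (B : ℝ → Matrix (Fin r) (Fin d) ℝ) (hB : ∀ t, B t = (2:ℝ) • (U₂₂ t * Y₂₁ t))
    (C : ℝ → Matrix (Fin d) (Fin d) ℝ) (hC : ∀ t, C t = Q₁₁ t + (Y₂₁ t)ᵀ * U₂₂ t * Y₂₁ t)
    (R : ℝ → Matrix (Fin d) (Fin d) ℝ) (hR : ∀ t, R t = -Y₁₁ t)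
    (Sg : ℝ → Matrix (Fin d) (Fin d) ℝ) (hSg : ∀ t, Sg t = (1/2 : ℝ) • U₁₁ t)
    -- `(M₁, M₂, M₃)` is a C¹ solution of the Riccati ODE system
    (M₁ : ℝ → Matrix (Fin d) (Fin d) ℝ) (M₂ : ℝ → Matrix (Fin d) (Fin r) ℝ)
    (M₃ : ℝ → Matrix (Fin r) (Fin r) ℝ)
    (hM₁s : ∀ t ∈ Icc (0:ℝ) T, (M₁ t).IsSymm) (hM₃s : ∀ t ∈ Icc (0:ℝ) T, (M₃ t).IsSymm)
    (hM₁C1 : ∀ i j, ContDiffOn ℝ 1 (fun τ => M₁ τ i j) (Icc (0:ℝ) T))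
    (hM₂C1 : ∀ i j, ContDiffOn ℝ 1 (fun τ => M₂ τ i j) (Icc (0:ℝ) T))
    (hM₃C1 : ∀ i j, ContDiffOn ℝ 1 (fun τ => M₃ τ i j) (Icc (0:ℝ) T))
    (hM₁ode : ∀ t ∈ Icc (0:ℝ) T, ∀ i j,
      HasDerivWithinAt (fun τ => M₁ τ i j)
        ((-((1/4 : ℝ) • ((M₂ t - (B t)ᵀ) * (A t)⁻¹ * ((M₂ t)ᵀ - B t))) + C t
          - (R t)ᵀ * M₁ t - M₁ t * R t + (2 * ρ) • (M₁ t * Sg t * M₁ t)) i j)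
        (Icc (0:ℝ) T) t)
    (hM₂ode : ∀ t ∈ Icc (0:ℝ) T, ∀ i j,
      HasDerivWithinAt (fun τ => M₂ τ i j)
        ((-((M₂ t - (B t)ᵀ) * (A t)⁻¹ * M₃ t) - (R t)ᵀ * M₂ t
          + (2 * ρ) • (M₁ t * Sg t * M₂ t)) i j)
        (Icc (0:ℝ) T) t)
    (hM₃ode : ∀ t ∈ Icc (0:ℝ) T, ∀ i j,
      HasDerivWithinAt (fun τ => M₃ τ i j)
        ((-(M₃ t * (A t)⁻¹ * M₃ t) + (ρ / 2) • ((M₂ t)ᵀ * Sg t * M₂ t)) i j)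
        (Icc (0:ℝ) T) t)
    (hM₁T : M₁ T = -Ψ) (hM₂T : M₂ T = -Υ) (hM₃T : M₃ T = -Γ) :
    (∀ t ∈ Icc (0:ℝ) T, ∀ (x : Fin d → ℝ) (y : Fin r → ℝ),
      0 = ptime T (thetaAnsatz T M₁ M₂ M₃ Sg) t x y
        + (1/4 : ℝ) * ((gradY (thetaAnsatz T M₁ M₂ M₃ Sg) t x y - (B t).mulVec x) ⬝ᵥ
            (A t)⁻¹.mulVec (gradY (thetaAnsatz T M₁ M₂ M₃ Sg) t x y - (B t).mulVec x))
        - x ⬝ᵥ (C t).mulVec x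
        + x ⬝ᵥ (R t)ᵀ.mulVec (gradX (thetaAnsatz T M₁ M₂ M₃ Sg) t x y)
        + (1/2 : ℝ) * (Sg t * hessX (thetaAnsatz T M₁ M₂ M₃ Sg) t x y).trace
        - (ρ / 2) * (gradX (thetaAnsatz T M₁ M₂ M₃ Sg) t x y ⬝ᵥ
            (Sg t).mulVec (gradX (thetaAnsatz T M₁ M₂ M₃ Sg) t x y))) ∧
    (∀ (x : Fin d → ℝ) (y : Fin r → ℝ),
      thetaAnsatz T M₁ M₂ M₃ Sg T x y
        = -(x ⬝ᵥ Ψ.mulVec x + x ⬝ᵥ Υ.mulVec y + y ⬝ᵥ Γ.mulVec y)) :=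
  quadratic_ansatz_solves_pde_general d r T ρ hT U₁₁ U₂₂ Ψ Γ Υ hU₁₁c hU₁₁ hU₂₂ A hA B C R Sg hSg M₁
    M₂ M₃ hM₁s hM₃s hM₁ode hM₂ode hM₃ode hM₁T hM₂T hM₃T
end
end

section
/- Suppose θ : [0,T]×ℝ^d×ℝ^r → ℝ is continuously differentiable in t and y and twice continuously differentiable in x, and satisfies, for all (t,x,y) ∈ [0,T]×ℝ^d×ℝ^r, the equation 0 = ∂ₜθ + ¼(∇_yθ − B(t)x)ᵀA(t)⁻¹(∇_yθ − B(t)x) − xᵀC(t)x + xᵀR(t)ᵀ∇ₓθ + ½Tr(Σ(t)·D²ₓₓθ) − (ρ/2)(∇ₓθ)ᵀΣ(t)∇ₓθ with terminal condition θ(T,x,y) = −(xᵀΨx + xᵀΥy + yᵀΓy). Then the function w(t,x,y,z) := −exp(−ρ(z + θ(t,x,y))) satisfies, for all (t,x,y,z) ∈ [0,T]×ℝ^d×ℝ^r×ℝ, the Hamilton–Jacobi–Bellman equation 0 = ∂ₜw + sup_{u ∈ ℝ^r} { uᵀ∇_yw − (uᵀA(t)u + uᵀB(t)x)·∂_zw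 } − xᵀC(t)x·∂_zw + xᵀR(t)ᵀ∇ₓw + ½Tr(Σ(t)·D²ₓₓw), with terminal condition w(T,x,y,z) = −exp(−ρ(z − xᵀΨx − xᵀΥy − yᵀΓy)); moreover, for each (t,x,y,z) the supremum over u is attained at u* = ½·A(t)⁻¹(∇_yθ(t,x,y) − B(t)x). -/
/-!
For `w = -exp (-ρ (z + θ))` every first derivative of `w` is `∂_z w = ρ exp (-ρ (z + θ)) > 0` times
the corresponding derivative of `θ`, while the `x`-Hessian is `∂_z w (D²ₓₓθ - ρ ∇ₓθ ∇ₓθᵀ)`.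
The `u`-dependent part of the HJB Hamiltonian is therefore `∂_z w` times the concave quadratic
`u ↦ uᵀ(∇_yθ - Bx) - uᵀAu`, maximised at its vertex `½ A⁻¹(∇_yθ - Bx)` with value
`¼ (∇_yθ - Bx)ᵀA⁻¹(∇_yθ - Bx)`, and the HJB equation becomes `∂_z w` times the reduced PDE.
-/

open Matrix Set

noncomputable section

variable {d r : ℕ}

/-- Partial derivative in time of `w(t,x,y,z)` along `[0,T]`. -/
def ptimeW (T : ℝ) (w : ℝ → (Fin d → ℝ) → (Fin r → ℝ) → ℝ → ℝ)
    (t : ℝ) (x : Fin d → ℝ) (y : Fin r → ℝ) (z : ℝ) : ℝ :=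
  derivWithin (fun τ => w τ x y z) (Icc 0 T) t

/-- Gradient of `w(t,x,y,z)` in `x`. -/
def gradXW (w : ℝ → (Fin d → ℝ) → (Fin r → ℝ) → ℝ → ℝ)
    (t : ℝ) (x : Fin d → ℝ) (y : Fin r → ℝ) (z : ℝ) : Fin d → ℝ :=
  fun i => deriv (fun s => w t (Function.update x i s) y z) (x i)

/-- Gradient of `w(t,x,y,z)` in `y`. -/
def gradYW (w : ℝ → (Fin d → ℝ) → (Fin r → ℝ) → ℝ → ℝ)
    (t : ℝ) (x : Fin d → ℝ) (y : Fin r → ℝ) (z : ℝ) : Fin r → ℝ :=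
  fun j => deriv (fun s => w t x (Function.update y j s) z) (y j)

/-- Partial derivative of `w(t,x,y,z)` in `z`. -/
def pzW (w : ℝ → (Fin d → ℝ) → (Fin r → ℝ) → ℝ → ℝ)
    (t : ℝ) (x : Fin d → ℝ) (y : Fin r → ℝ) (z : ℝ) : ℝ :=
  deriv (fun ζ => w t x y ζ) z

/-- Hessian of `w(t,x,y,z)` in `x`. -/
def hessXW (w : ℝ → (Fin d → ℝ) → (Fin r → ℝ) → ℝ → ℝ)
    (t : ℝ) (x : Fin d → ℝ) (y : Fin r → ℝ) (z : ℝ) : Matrix (Fin d) (Fin d) ℝ :=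
  fun i j => deriv (fun s => gradXW w t (Function.update x j s) y z i) (x j)

theorem DifferentiableAt.hasDerivAt_comp_update {𝕜 ι F : Type*} [NontriviallyNormedField 𝕜]
    [Fintype ι] [DecidableEq ι] [NormedAddCommGroup F] [NormedSpace 𝕜 F]
    {f : (ι → 𝕜) → F} {x : ι → 𝕜} (hf : DifferentiableAt 𝕜 f x) (i : ι) :
    HasDerivAt (fun s => f (Function.update x i s)) (fderiv 𝕜 f x (Pi.single i 1)) (x i) := by
  have hf' : HasFDerivAt f (fderiv 𝕜 f x) (Function.update x i (x i)) := by
    rw [Function.update_eq_self]; exact hf.hasFDerivAt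
  exact hf'.comp_hasDerivAt (x i) (hasDerivAt_update x i (x i))

theorem dotProduct_smul_sub_quadratic_mul {n : Type*} [Fintype n] (A : Matrix n n ℝ) (c : ℝ)
    (p b u : n → ℝ) :
    u ⬝ᵥ c • p - (u ⬝ᵥ A *ᵥ u + u ⬝ᵥ b) * c = c * (u ⬝ᵥ (p - b) - u ⬝ᵥ A *ᵥ u) := by
  rw [dotProduct_smul, dotProduct_sub, smul_eq_mul]
  ring

section QuadraticMaximization

variable {n : Type*} [Fintype n] [DecidableEq n] {A : Matrix n n ℝ}

def quadraticVertex (A : Matrix n n ℝ) (q : n → ℝ) : n → ℝ := (1/2 : ℝ) • A⁻¹ *ᵥ q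

theorem Matrix.PosDef.mulVec_quadraticVertex (hA : A.PosDef) (q : n → ℝ) :
    A *ᵥ quadraticVertex A q = (1/2 : ℝ) • q := by
  rw [quadraticVertex, mulVec_smul, mulVec_mulVec,
    mul_nonsing_inv _ ((isUnit_iff_isUnit_det A).mp hA.isUnit), one_mulVec]

theorem Matrix.PosDef.dotProduct_sub_quadratic_le (hA : A.PosDef) (q u : n → ℝ) :
    u ⬝ᵥ q - u ⬝ᵥ A *ᵥ u
      ≤ quadraticVertex A q ⬝ᵥ q - quadraticVertex A q ⬝ᵥ A *ᵥ quadraticVertex A q := by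
  set v := quadraticVertex A q
  have hAv : A *ᵥ v = (1/2 : ℝ) • q := hA.mulVec_quadraticVertex q
  have hsymm : v ⬝ᵥ A *ᵥ u = u ⬝ᵥ A *ᵥ v := by
    rw [dotProduct_mulVec, ← mulVec_transpose, ← conjTranspose_eq_transpose_of_trivial,
      hA.isHermitian.eq, dotProduct_comm]
  -- the gap between the two sides is `(u - v)ᵀ A (u - v)`
  have hnonneg : 0 ≤ (u - v) ⬝ᵥ A *ᵥ (u - v) := hA.posSemidef.dotProduct_mulVec_nonneg _
  simp only [mulVec_sub, dotProduct_sub, sub_dotProduct, hsymm] at hnonneg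
  simp only [hAv, dotProduct_smul, smul_eq_mul] at hnonneg ⊢
  linarith

theorem Matrix.PosDef.value_quadraticVertex (hA : A.PosDef) (q : n → ℝ) :
    quadraticVertex A q ⬝ᵥ q - quadraticVertex A q ⬝ᵥ A *ᵥ quadraticVertex A q
      = (1/4 : ℝ) * (q ⬝ᵥ A⁻¹ *ᵥ q) := by
  rw [hA.mulVec_quadraticVertex, dotProduct_comm q]
  simp only [quadraticVertex, dotProduct_smul, smul_dotProduct, smul_eq_mul]
  ring

theorem Matrix.PosDef.isGreatest_hamiltonian (hA : A.PosDef) {c : ℝ} (hc : 0 ≤ c)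
    (p b : n → ℝ) :
    IsGreatest (range fun u => u ⬝ᵥ c • p - (u ⬝ᵥ A *ᵥ u + u ⬝ᵥ b) * c)
      (quadraticVertex A (p - b) ⬝ᵥ c • p
        - (quadraticVertex A (p - b) ⬝ᵥ A *ᵥ quadraticVertex A (p - b)
          + quadraticVertex A (p - b) ⬝ᵥ b) * c) := by
  refine ⟨⟨_, rfl⟩, ?_⟩
  rintro _ ⟨u, rfl⟩
  simp only [dotProduct_smul_sub_quadratic_mul]
  exact mul_le_mul_of_nonneg_left (hA.dotProduct_sub_quadratic_le _ u) hc

theorem Matrix.PosDef.hamiltonian_quadraticVertex (hA : A.PosDef) (c : ℝ)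
    (p b : n → ℝ) :
    quadraticVertex A (p - b) ⬝ᵥ c • p
        - (quadraticVertex A (p - b) ⬝ᵥ A *ᵥ quadraticVertex A (p - b)
          + quadraticVertex A (p - b) ⬝ᵥ b) * c
      = c * ((1/4 : ℝ) * ((p - b) ⬝ᵥ A⁻¹ *ᵥ (p - b))) := by
  rw [dotProduct_smul_sub_quadratic_mul, hA.value_quadraticVertex]

end QuadraticMaximization

theorem Matrix.trace_mul_vecMulVec {n R : Type*} [Fintype n] [CommSemiring R]
    (S : Matrix n n R) (a b : n → R) : (S * vecMulVec a b).trace = b ⬝ᵥ S *ᵥ a := by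
  rw [mul_vecMulVec, trace_vecMulVec, dotProduct_comm]

def expTransform (ρ : ℝ) (θ : ℝ → (Fin d → ℝ) → (Fin r → ℝ) → ℝ) :
    ℝ → (Fin d → ℝ) → (Fin r → ℝ) → ℝ → ℝ :=
  fun t x y z => -Real.exp (-(ρ * (z + θ t x y)))

section ExpTransform

variable {ρ z : ℝ} {g : ℝ → ℝ} {g' a : ℝ}

theorem HasDerivAt.neg_exp_neg_mul_add (hg : HasDerivAt g g' a) :
    HasDerivAt (fun s => -Real.exp (-(ρ * (z + g s)))) (ρ * Real.exp (-(ρ * (z + g a))) * g') a :=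
  (((hg.const_add z).const_mul ρ).neg.exp.neg).congr_deriv (by simp only [Pi.neg_apply]; ring)

theorem HasDerivWithinAt.neg_exp_neg_mul_add {s : Set ℝ} (hg : HasDerivWithinAt g g' s a) :
    HasDerivWithinAt (fun s => -Real.exp (-(ρ * (z + g s))))
      (ρ * Real.exp (-(ρ * (z + g a))) * g') s a :=
  (((hg.const_add z).const_mul ρ).neg.exp.neg).congr_deriv (by simp only [Pi.neg_apply]; ring)

variable {θ : ℝ → (Fin d → ℝ) → (Fin r → ℝ) → ℝ} {t : ℝ} {x : Fin d → ℝ} {y : Fin r → ℝ}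

theorem pzW_expTransform :
    pzW (expTransform ρ θ) t x y z = ρ * Real.exp (-(ρ * (z + θ t x y))) := by
  have h := ((hasDerivAt_id' z).const_add (θ t x y)).neg_exp_neg_mul_add (ρ := ρ) (z := 0)
  simp only [zero_add, add_comm (θ t x y), mul_one] at h
  exact h.deriv

theorem gradYW_expTransform (hθ : DifferentiableAt ℝ (fun y => θ t x y) y) :
    gradYW (expTransform ρ θ) t x y z = pzW (expTransform ρ θ) t x y z • gradY θ t x y := by
  ext j
  have h := (hθ.hasDerivAt_comp_update j).differentiableAt.hasDerivAt.neg_exp_neg_mul_add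
    (ρ := ρ) (z := z)
  rw [Function.update_eq_self] at h
  rw [pzW_expTransform]
  exact h.deriv

theorem gradXW_expTransform (hθ : DifferentiableAt ℝ (fun x => θ t x y) x) :
    gradXW (expTransform ρ θ) t x y z = pzW (expTransform ρ θ) t x y z • gradX θ t x y := by
  ext i
  have h := (hθ.hasDerivAt_comp_update i).differentiableAt.hasDerivAt.neg_exp_neg_mul_add
    (ρ := ρ) (z := z)
  rw [Function.update_eq_self] at h
  rw [pzW_expTransform]
  exact h.deriv

theorem ptimeW_expTransform {T : ℝ} (hT : 0 < T) (ht : t ∈ Icc 0 T)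
    (hθ : DifferentiableWithinAt ℝ (fun τ => θ τ x y) (Icc 0 T) t) :
    ptimeW T (expTransform ρ θ) t x y z = pzW (expTransform ρ θ) t x y z * ptime T θ t x y := by
  rw [pzW_expTransform]
  exact (hθ.hasDerivWithinAt.neg_exp_neg_mul_add).derivWithin (uniqueDiffOn_Icc hT t ht)

theorem ContDiff.differentiable_gradX (hθ : ContDiff ℝ 2 (fun x => θ t x y)) (i : Fin d) :
    Differentiable ℝ (fun x => gradX θ t x y i) := by
  have hgradX : (fun x => gradX θ t x y i)
      = fun x => fderiv ℝ (fun x => θ t x y) x (Pi.single i 1) :=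
    funext fun x => ((hθ.differentiable two_ne_zero x).hasDerivAt_comp_update i).deriv
  rw [hgradX]
  exact ((hθ.fderiv_right (by norm_num)).clm_apply contDiff_const).differentiable one_ne_zero

theorem hessXW_expTransform (hθ : ContDiff ℝ 2 (fun x => θ t x y)) :
    hessXW (expTransform ρ θ) t x y z = pzW (expTransform ρ θ) t x y z •
      (hessX θ t x y - ρ • vecMulVec (gradX θ t x y) (gradX θ t x y)) := by
  have hdiff := hθ.differentiable two_ne_zero
  ext i j
  have hgradXW : (fun s => gradXW (expTransform ρ θ) t (Function.update x j s) y z i)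
      = fun s => ρ * Real.exp (-(ρ * (z + θ t (Function.update x j s) y)))
          * gradX θ t (Function.update x j s) y i :=
    funext fun s => by rw [gradXW_expTransform (hdiff _), pzW_expTransform]; rfl
  have hθj : HasDerivAt (fun s => θ t (Function.update x j s) y) (gradX θ t x y j) (x j) :=
    ((hdiff x).hasDerivAt_comp_update j).differentiableAt.hasDerivAt
  have hgradXj : HasDerivAt (fun s => gradX θ t (Function.update x j s) y i)
      (hessX θ t x y i j) (x j) :=
    ((hθ.differentiable_gradX i x).hasDerivAt_comp_update j).differentiableAt.hasDerivAt
  have h : HasDerivAt (fun s => ρ * Real.exp (-(ρ * (z + θ t (Function.update x j s) y)))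
      * gradX θ t (Function.update x j s) y i) _ (x j) :=
    ((((hθj.const_add z).const_mul ρ).neg.exp).const_mul ρ).mul hgradXj
  simp only [hessXW, hgradXW, h.deriv, pzW_expTransform, Matrix.smul_apply, Matrix.sub_apply,
    vecMulVec_apply, smul_eq_mul, Pi.neg_apply, Function.update_eq_self]
  ring

end ExpTransform

theorem reduced_pde_implies_hjb_general
    (d r : ℕ)
    (T ρ : ℝ) (hT : 0 < T) (hρ : 0 < ρ)
    (U₂₂ : ℝ → Matrix (Fin r) (Fin r) ℝ)
    (Ψ : Matrix (Fin d) (Fin d) ℝ) (Γ : Matrix (Fin r) (Fin r) ℝ)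
    (Υ : Matrix (Fin d) (Fin r) ℝ)
    (hU₂₂ : ∀ t ∈ Icc (0:ℝ) T, (U₂₂ t).PosDef)
    -- the change of variables
    (A : ℝ → Matrix (Fin r) (Fin r) ℝ) (hA : ∀ t, A t = (U₂₂ t)⁻¹)
    (B : ℝ → Matrix (Fin r) (Fin d) ℝ)
    (C : ℝ → Matrix (Fin d) (Fin d) ℝ)
    (R : ℝ → Matrix (Fin d) (Fin d) ℝ)
    (Sg : ℝ → Matrix (Fin d) (Fin d) ℝ)
    -- `θ` is C¹ in `t` and `y` and C² in `x`
    (θ : ℝ → (Fin d → ℝ) → (Fin r → ℝ) → ℝ)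
    (hθt : ∀ (x : Fin d → ℝ) (y : Fin r → ℝ), ContDiffOn ℝ 1 (fun τ => θ τ x y) (Icc (0:ℝ) T))
    (hθy : ∀ t ∈ Icc (0:ℝ) T, ∀ x : Fin d → ℝ, ContDiff ℝ 1 (fun y => θ t x y))
    (hθx : ∀ t ∈ Icc (0:ℝ) T, ∀ y : Fin r → ℝ, ContDiff ℝ 2 (fun x => θ t x y))
    -- `θ` solves the reduced PDE on `[0,T]`
    (hθpde : ∀ t ∈ Icc (0:ℝ) T, ∀ (x : Fin d → ℝ) (y : Fin r → ℝ),
      0 = ptime T θ t x y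
        + (1/4 : ℝ) * ((gradY θ t x y - (B t).mulVec x) ⬝ᵥ
            (A t)⁻¹.mulVec (gradY θ t x y - (B t).mulVec x))
        - x ⬝ᵥ (C t).mulVec x
        + x ⬝ᵥ (R t)ᵀ.mulVec (gradX θ t x y)
        + (1/2 : ℝ) * (Sg t * hessX θ t x y).trace
        - (ρ / 2) * (gradX θ t x y ⬝ᵥ (Sg t).mulVec (gradX θ t x y)))
    -- terminal condition for `θ`
    (hθT : ∀ (x : Fin d → ℝ) (y : Fin r → ℝ),
      θ T x y = -(x ⬝ᵥ Ψ.mulVec x + x ⬝ᵥ Υ.mulVec y + y ⬝ᵥ Γ.mulVec y)) :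
    -- `w` solves the HJB equation …
    (∀ t ∈ Icc (0:ℝ) T, ∀ (x : Fin d → ℝ) (y : Fin r → ℝ) (z : ℝ),
      0 = ptimeW T (fun t x y z => -Real.exp (-(ρ * (z + θ t x y)))) t x y z
        + sSup (Set.range fun u : Fin r → ℝ =>
            u ⬝ᵥ gradYW (fun t x y z => -Real.exp (-(ρ * (z + θ t x y)))) t x y z
              - (u ⬝ᵥ (A t).mulVec u + u ⬝ᵥ (B t).mulVec x)
                  * pzW (fun t x y z => -Real.exp (-(ρ * (z + θ t x y)))) t x y z)
        - (x ⬝ᵥ (C t).mulVec x)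
            * pzW (fun t x y z => -Real.exp (-(ρ * (z + θ t x y)))) t x y z
        + x ⬝ᵥ (R t)ᵀ.mulVec (gradXW (fun t x y z => -Real.exp (-(ρ * (z + θ t x y)))) t x y z)
        + (1/2 : ℝ)
            * (Sg t * hessXW (fun t x y z => -Real.exp (-(ρ * (z + θ t x y)))) t x y z).trace) ∧
    -- … with the correct terminal condition …
    (∀ (x : Fin d → ℝ) (y : Fin r → ℝ) (z : ℝ),
      -Real.exp (-(ρ * (z + θ T x y)))
        = -Real.exp (-(ρ * (z - x ⬝ᵥ Ψ.mulVec x - x ⬝ᵥ Υ.mulVec y - y ⬝ᵥ Γ.mulVec y)))) ∧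
    -- … and the supremum over `u` is attained at `u* = ½A(t)⁻¹(∇_yθ − Bx)`
    (∀ t ∈ Icc (0:ℝ) T, ∀ (x : Fin d → ℝ) (y : Fin r → ℝ) (z : ℝ),
      IsGreatest (Set.range fun u : Fin r → ℝ =>
          u ⬝ᵥ gradYW (fun t x y z => -Real.exp (-(ρ * (z + θ t x y)))) t x y z
            - (u ⬝ᵥ (A t).mulVec u + u ⬝ᵥ (B t).mulVec x)
                * pzW (fun t x y z => -Real.exp (-(ρ * (z + θ t x y)))) t x y z)
        (((1/2 : ℝ) • (A t)⁻¹.mulVec (gradY θ t x y - (B t).mulVec x)) ⬝ᵥ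
            gradYW (fun t x y z => -Real.exp (-(ρ * (z + θ t x y)))) t x y z
          - (((1/2 : ℝ) • (A t)⁻¹.mulVec (gradY θ t x y - (B t).mulVec x)) ⬝ᵥ
                (A t).mulVec ((1/2 : ℝ) • (A t)⁻¹.mulVec (gradY θ t x y - (B t).mulVec x))
              + ((1/2 : ℝ) • (A t)⁻¹.mulVec (gradY θ t x y - (B t).mulVec x)) ⬝ᵥ
                  (B t).mulVec x)
              * pzW (fun t x y z => -Real.exp (-(ρ * (z + θ t x y)))) t x y z)) := by
  rw [show (fun t x y z => -Real.exp (-(ρ * (z + θ t x y)))) = expTransform ρ θ from rfl]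
  have hApd : ∀ t ∈ Icc (0:ℝ) T, (A t).PosDef := fun t ht => hA t ▸ (hU₂₂ t ht).inv
  have hpzW : ∀ t x y z, 0 ≤ pzW (expTransform ρ θ) t x y z := fun t x y z => by
    rw [pzW_expTransform]; exact mul_nonneg hρ.le (Real.exp_nonneg _)
  have hgradYW : ∀ t ∈ Icc (0:ℝ) T, ∀ x y z, gradYW (expTransform ρ θ) t x y z
      = pzW (expTransform ρ θ) t x y z • gradY θ t x y := fun t ht x y _ =>
    gradYW_expTransform ((hθy t ht x).differentiable one_ne_zero y)
  refine ⟨fun t ht x y z => ?_, fun x y z => by rw [hθT]; ring_nf, fun t ht x y z => ?_⟩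
  · rw [hgradYW t ht x y z,
      ((hApd t ht).isGreatest_hamiltonian (hpzW t x y z) _ _).csSup_eq,
      (hApd t ht).hamiltonian_quadraticVertex,
      ptimeW_expTransform hT ht ((hθt x y).differentiableOn one_ne_zero t ht),
      gradXW_expTransform ((hθx t ht y).differentiable two_ne_zero x),
      hessXW_expTransform (hθx t ht y)]
    simp only [mulVec_smul, dotProduct_smul, smul_eq_mul, Matrix.mul_smul, Matrix.mul_sub,
      trace_smul, trace_sub, trace_mul_vecMulVec]
    linear_combination pzW (expTransform ρ θ) t x y z * hθpde t ht x y
  · rw [hgradYW t ht x y z]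
    exact (hApd t ht).isGreatest_hamiltonian (hpzW t x y z) _ _

/-- **Theorem 1 (verification step).** If `θ` solves the reduced PDE with terminal condition
`θ(T,x,y) = −(xᵀΨx + xᵀΥy + yᵀΓy)`, then `w(t,x,y,z) = −exp(−ρ(z + θ(t,x,y)))` solves the
HJB equation of the LEQG control problem, and for each `(t,x,y,z)` the supremum over `u` is
attained at `u* = ½A(t)⁻¹(∇_yθ(t,x,y) − B(t)x)`. -/
theorem reduced_pde_implies_hjb
    (d r : ℕ) (hd : 0 < d) (hr : 0 < r) (hrd : r ≤ d)
    (T ρ : ℝ) (hT : 0 < T) (hρ : 0 < ρ)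
    (Q₁₁ Y₁₁ U₁₁ : ℝ → Matrix (Fin d) (Fin d) ℝ)
    (Y₂₁ : ℝ → Matrix (Fin r) (Fin d) ℝ)
    (U₂₂ : ℝ → Matrix (Fin r) (Fin r) ℝ)
    (Ψ : Matrix (Fin d) (Fin d) ℝ) (Γ : Matrix (Fin r) (Fin r) ℝ)
    (Υ : Matrix (Fin d) (Fin r) ℝ)
    (hQ₁₁c : ContinuousOn Q₁₁ (Icc 0 T)) (hQ₁₁s : ∀ t ∈ Icc (0:ℝ) T, (Q₁₁ t).IsSymm)
    (hY₁₁c : ContinuousOn Y₁₁ (Icc 0 T))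
    (hY₂₁c : ContinuousOn Y₂₁ (Icc 0 T))
    (hU₁₁c : ContinuousOn U₁₁ (Icc 0 T)) (hU₁₁ : ∀ t ∈ Icc (0:ℝ) T, (U₁₁ t).PosSemidef)
    (hU₂₂c : ContinuousOn U₂₂ (Icc 0 T)) (hU₂₂ : ∀ t ∈ Icc (0:ℝ) T, (U₂₂ t).PosDef)
    (hΨ : Ψ.PosSemidef) (hΓ : Γ.IsSymm)
    -- the change of variables
    (A : ℝ → Matrix (Fin r) (Fin r) ℝ) (hA : ∀ t, A t = (U₂₂ t)⁻¹)
    (B : ℝ → Matrix (Fin r) (Fin d) ℝ) (hB : ∀ t, B t = (2:ℝ) • (U₂₂ t * Y₂₁ t))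
    (C : ℝ → Matrix (Fin d) (Fin d) ℝ) (hC : ∀ t, C t = Q₁₁ t + (Y₂₁ t)ᵀ * U₂₂ t * Y₂₁ t)
    (R : ℝ → Matrix (Fin d) (Fin d) ℝ) (hR : ∀ t, R t = -Y₁₁ t)
    (Sg : ℝ → Matrix (Fin d) (Fin d) ℝ) (hSg : ∀ t, Sg t = (1/2 : ℝ) • U₁₁ t)
    -- `θ` is C¹ in `t` and `y` and C² in `x`
    (θ : ℝ → (Fin d → ℝ) → (Fin r → ℝ) → ℝ)
    (hθt : ∀ (x : Fin d → ℝ) (y : Fin r → ℝ), ContDiffOn ℝ 1 (fun τ => θ τ x y) (Icc (0:ℝ) T))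
    (hθy : ∀ t ∈ Icc (0:ℝ) T, ∀ x : Fin d → ℝ, ContDiff ℝ 1 (fun y => θ t x y))
    (hθx : ∀ t ∈ Icc (0:ℝ) T, ∀ y : Fin r → ℝ, ContDiff ℝ 2 (fun x => θ t x y))
    -- `θ` solves the reduced PDE on `[0,T]`
    (hθpde : ∀ t ∈ Icc (0:ℝ) T, ∀ (x : Fin d → ℝ) (y : Fin r → ℝ),
      0 = ptime T θ t x y
        + (1/4 : ℝ) * ((gradY θ t x y - (B t).mulVec x) ⬝ᵥ
            (A t)⁻¹.mulVec (gradY θ t x y - (B t).mulVec x))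
        - x ⬝ᵥ (C t).mulVec x
        + x ⬝ᵥ (R t)ᵀ.mulVec (gradX θ t x y)
        + (1/2 : ℝ) * (Sg t * hessX θ t x y).trace
        - (ρ / 2) * (gradX θ t x y ⬝ᵥ (Sg t).mulVec (gradX θ t x y)))
    -- terminal condition for `θ`
    (hθT : ∀ (x : Fin d → ℝ) (y : Fin r → ℝ),
      θ T x y = -(x ⬝ᵥ Ψ.mulVec x + x ⬝ᵥ Υ.mulVec y + y ⬝ᵥ Γ.mulVec y)) :
    -- `w` solves the HJB equation …
    (∀ t ∈ Icc (0:ℝ) T, ∀ (x : Fin d → ℝ) (y : Fin r → ℝ) (z : ℝ),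
      0 = ptimeW T (fun t x y z => -Real.exp (-(ρ * (z + θ t x y)))) t x y z
        + sSup (Set.range fun u : Fin r → ℝ =>
            u ⬝ᵥ gradYW (fun t x y z => -Real.exp (-(ρ * (z + θ t x y)))) t x y z
              - (u ⬝ᵥ (A t).mulVec u + u ⬝ᵥ (B t).mulVec x)
                  * pzW (fun t x y z => -Real.exp (-(ρ * (z + θ t x y)))) t x y z)
        - (x ⬝ᵥ (C t).mulVec x)
            * pzW (fun t x y z => -Real.exp (-(ρ * (z + θ t x y)))) t x y z
        + x ⬝ᵥ (R t)ᵀ.mulVec (gradXW (fun t x y z => -Real.exp (-(ρ * (z + θ t x y)))) t x y z)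
        + (1/2 : ℝ)
            * (Sg t * hessXW (fun t x y z => -Real.exp (-(ρ * (z + θ t x y)))) t x y z).trace) ∧
    -- … with the correct terminal condition …
    (∀ (x : Fin d → ℝ) (y : Fin r → ℝ) (z : ℝ),
      -Real.exp (-(ρ * (z + θ T x y)))
        = -Real.exp (-(ρ * (z - x ⬝ᵥ Ψ.mulVec x - x ⬝ᵥ Υ.mulVec y - y ⬝ᵥ Γ.mulVec y)))) ∧
    -- … and the supremum over `u` is attained at `u* = ½A(t)⁻¹(∇_yθ − Bx)`
    (∀ t ∈ Icc (0:ℝ) T, ∀ (x : Fin d → ℝ) (y : Fin r → ℝ) (z : ℝ),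
      IsGreatest (Set.range fun u : Fin r → ℝ =>
          u ⬝ᵥ gradYW (fun t x y z => -Real.exp (-(ρ * (z + θ t x y)))) t x y z
            - (u ⬝ᵥ (A t).mulVec u + u ⬝ᵥ (B t).mulVec x)
                * pzW (fun t x y z => -Real.exp (-(ρ * (z + θ t x y)))) t x y z)
        (((1/2 : ℝ) • (A t)⁻¹.mulVec (gradY θ t x y - (B t).mulVec x)) ⬝ᵥ
            gradYW (fun t x y z => -Real.exp (-(ρ * (z + θ t x y)))) t x y z
          - (((1/2 : ℝ) • (A t)⁻¹.mulVec (gradY θ t x y - (B t).mulVec x)) ⬝ᵥ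
                (A t).mulVec ((1/2 : ℝ) • (A t)⁻¹.mulVec (gradY θ t x y - (B t).mulVec x))
              + ((1/2 : ℝ) • (A t)⁻¹.mulVec (gradY θ t x y - (B t).mulVec x)) ⬝ᵥ
                  (B t).mulVec x)
              * pzW (fun t x y z => -Real.exp (-(ρ * (z + θ t x y)))) t x y z)) :=
  reduced_pde_implies_hjb_general d r T ρ hT hρ U₂₂ Ψ Γ Υ hU₂₂ A hA B C R Sg θ hθt hθy hθx hθpde hθT
end
end

section
/- Let A > 0, k > 0, ρ > 0, z > 0 and p ∈ ℝ. Then sup_{δ ∈ ℝ} (A·e^{−kδ}/(ρz))·(1 − e^{−ρz(δ−p)}) = (A/k)·(1 + ρz/k)^{−(1 + k/(ρz))}·e^{−kp}. -/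
/-!
Write `γ = ρz` and `k = aγ`. Substituting `t = γ(δ - p)` turns the objective into
`(A/γ) e^{-kp}` times `g(t) = e^{-at}(1 - e^{-t})`, so it suffices to maximise `g`.
Its maximiser is `t₀ = log (1 + 1/a)`, and in the shifted variable `s = t - t₀` one has
`g(t) = g(t₀) · e^{-as}(1 + a - a e^{-s})`; the last factor is at most `1` by the tangent-line
bounds `e^{-s} ≥ 1 - s` and `e^{as} ≥ 1 + as`.
-/

open Real Set

lemma one_add_sub_mul_exp_neg_le_exp {a : ℝ} (ha : 0 ≤ a) (s : ℝ) :
    1 + a - a * exp (-s) ≤ exp (a * s) := by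
  nlinarith [add_one_le_exp (-s), add_one_le_exp (a * s)]

lemma exp_neg_mul_mul_one_add_sub_mul_exp_neg_le_one {a : ℝ} (ha : 0 ≤ a) (s : ℝ) :
    exp (-(a * s)) * (1 + a - a * exp (-s)) ≤ 1 :=
  calc _ ≤ exp (-(a * s)) * exp (a * s) :=
        mul_le_mul_of_nonneg_left (one_add_sub_mul_exp_neg_le_exp ha s) (exp_pos _).le
    _ = 1 := by rw [← exp_add, neg_add_cancel, exp_zero]

lemma isGreatest_range_exp_neg_mul_mul_one_sub_exp_neg {a : ℝ} (ha : 0 < a) :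
    IsGreatest (range fun t => exp (-(a * t)) * (1 - exp (-t)))
      ((1 + a⁻¹) ^ (-a) / (1 + a)) := by
  set t₀ := log (1 + a⁻¹)
  have hb : 0 < 1 + a⁻¹ := by positivity
  have hexp_t₀ : exp (-t₀) = a / (1 + a) := by
    rw [exp_neg, exp_log hb]; field_simp; ring
  have hexp_at₀ : exp (-(a * t₀)) = (1 + a⁻¹) ^ (-a) := by
    rw [rpow_def_of_pos hb, mul_neg, mul_comm]
  have hshift : ∀ t, exp (-(a * t)) * (1 - exp (-t)) =
      (1 + a⁻¹) ^ (-a) / (1 + a) * (exp (-(a * (t - t₀))) * (1 + a - a * exp (-(t - t₀)))) := by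
    intro t
    have h₁ : exp (-(a * t)) = exp (-(a * t₀)) * exp (-(a * (t - t₀))) := by
      rw [← exp_add]; ring_nf
    have h₂ : exp (-t) = exp (-t₀) * exp (-(t - t₀)) := by
      rw [← exp_add]; ring_nf
    rw [h₁, h₂, hexp_t₀, hexp_at₀]
    field_simp
  refine ⟨⟨t₀, ?_⟩, ?_⟩
  · simp only [hshift, sub_self, mul_zero, neg_zero, exp_zero]
    ring
  · rintro _ ⟨t, rfl⟩
    dsimp only
    rw [hshift]
    exact mul_le_of_le_one_right (by positivity)
      (exp_neg_mul_mul_one_add_sub_mul_exp_neg_le_one ha.le _)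

lemma range_exp_intensity_objective_eq_image (A a γ p : ℝ) (hγ : 0 < γ) :
    (range fun δ => A * exp (-(a * γ * δ)) / γ * (1 - exp (-(γ * (δ - p))))) =
      (A / γ * exp (-(a * γ * p)) * ·) '' range fun t => exp (-(a * t)) * (1 - exp (-t)) := by
  have hsurj : Function.Surjective fun δ : ℝ => γ * (δ - p) := fun t =>
    ⟨t / γ + p, by field_simp; ring⟩
  have hfactor : ∀ δ, A * exp (-(a * γ * δ)) / γ * (1 - exp (-(γ * (δ - p)))) =
      A / γ * exp (-(a * γ * p)) * (exp (-(a * (γ * (δ - p)))) * (1 - exp (-(γ * (δ - p))))) := by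
    intro δ
    have hsplit : exp (-(a * γ * δ)) = exp (-(a * γ * p)) * exp (-(a * (γ * (δ - p)))) := by
      rw [← exp_add]; ring_nf
    rw [hsplit]; ring
  simp only [hfactor]
  rw [range_comp']
  exact congrArg _ (hsurj.range_comp fun t => exp (-(a * t)) * (1 - exp (-t)))

/-- **Closed form of the market-making Hamiltonian for exponential intensities.** For
`Λ(δ) = A e^{-kδ}`, the supremum over `δ ∈ ℝ` of `(Λ(δ)/(ρz))(1 - e^{-ρz(δ-p)})` equals
`(A/k)(1 + ρz/k)^{-(1 + k/(ρz))} e^{-kp}`. -/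
theorem exponential_intensity_hamiltonian_closed_form
    (A k ρ z : ℝ) (hA : 0 < A) (hk : 0 < k) (hρ : 0 < ρ) (hz : 0 < z) (p : ℝ) :
    IsLUB (Set.range fun δ : ℝ =>
        A * Real.exp (-(k * δ)) / (ρ * z) * (1 - Real.exp (-(ρ * z * (δ - p)))))
      (A / k * (1 + ρ * z / k) ^ (-(1 + k / (ρ * z))) * Real.exp (-(k * p))) := by
  have hγ : 0 < ρ * z := mul_pos hρ hz
  generalize ρ * z = γ at hγ ⊢
  obtain ⟨a, ha, rfl⟩ : ∃ a, 0 < a ∧ k = a * γ := ⟨k / γ, div_pos hk hγ, by field_simp⟩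
  have hvalue : A / (a * γ) * (1 + γ / (a * γ)) ^ (-(1 + a * γ / γ)) * exp (-(a * γ * p)) =
      A / γ * exp (-(a * γ * p)) * ((1 + a⁻¹) ^ (-a) / (1 + a)) := by
    rw [show γ / (a * γ) = a⁻¹ by field_simp, show a * γ / γ = a by field_simp, neg_add,
      rpow_add (by positivity), rpow_neg_one]
    field_simp
    ring
  rw [range_exp_intensity_objective_eq_image A a γ p hγ, hvalue]
  exact ((monotone_mul_left_of_nonneg (by positivity)).map_isGreatest
    (isGreatest_range_exp_neg_mul_mul_one_sub_exp_neg ha)).isLUB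
end

section
/- Let A > 0, k > 0, ρ > 0, z > 0 and p ∈ ℝ. Then the function δ ↦ (A·e^{−kδ}/(ρz))·(1 − e^{−ρz(δ−p)}) on ℝ attains its supremum at the unique point δ* = p + (1/(ρz))·log(1 + ρz/k). -/
/-
With `r = ρz` and `D` the claimed optimum, `e^{-r(D-p)} = k/(k+r)`, so writing `s = δ - D` the
objective becomes a positive constant times `(k+r)e^{-ks} - k e^{-(k+r)s}`, which equals `r` at
`s = 0`. After multiplying by `e^{ks}`, the claim that it is `< r` for `s ≠ 0` reads
`k + r < r e^{ks} + k e^{-rs}`, a weighted tangent-line bound for `exp` whose exponents have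
weighted sum zero.
-/

open Real

theorem add_lt_mul_exp_add_mul_exp {a b x y : ℝ} (ha : 0 < a) (hb : 0 ≤ b)
    (hxy : a * x + b * y = 0) (hx : x ≠ 0) : a + b < a * exp x + b * exp y := by
  have hx' := mul_lt_mul_of_pos_left (add_one_lt_exp hx) ha
  have hy' := mul_le_mul_of_nonneg_left (add_one_le_exp y) hb
  linarith

section ExponentialIntensity

variable {k r : ℝ} (hk : 0 < k) (hr : 0 < r)
include hk hr

theorem mul_exp_neg_sub_mul_exp_neg_lt {s : ℝ} (hs : s ≠ 0) :
    (k + r) * exp (-(k * s)) - k * exp (-((k + r) * s)) < r := by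
  have hlt : r + k < r * exp (k * s) + k * exp (-(r * s)) :=
    add_lt_mul_exp_add_mul_exp hr hk.le (by ring) (mul_ne_zero hk.ne' hs)
  have hsplit : exp (-((k + r) * s)) = exp (-(k * s)) * exp (-(r * s)) := by
    rw [← exp_add]; ring_nf
  have hinv : exp (k * s) * exp (-(k * s)) = 1 := by rw [← exp_add]; simp
  rw [hsplit]
  nlinarith [mul_lt_mul_of_pos_right hlt (exp_pos (-(k * s)))]

theorem exp_neg_mul_one_div_mul_log : exp (-(r * (1 / r * log (1 + r / k)))) = k / (k + r) := by
  rw [← mul_assoc, mul_one_div_cancel hr.ne', one_mul, exp_neg, exp_log (by positivity)]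
  field_simp

theorem exp_intensity_objective_eq {p D : ℝ} (hD : exp (-(r * (D - p))) = k / (k + r))
    (A δ : ℝ) :
    A * exp (-(k * δ)) / r * (1 - exp (-(r * (δ - p)))) =
      A * exp (-(k * D)) / (r * (k + r)) *
        ((k + r) * exp (-(k * (δ - D))) - k * exp (-((k + r) * (δ - D)))) := by
  have hδ : exp (-(r * (δ - p))) = k / (k + r) * exp (-(r * (δ - D))) := by
    rw [← hD, ← exp_add]; ring_nf
  have hkδ : exp (-(k * δ)) = exp (-(k * D)) * exp (-(k * (δ - D))) := by
    rw [← exp_add]; ring_nf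
  have hkr : exp (-((k + r) * (δ - D))) = exp (-(k * (δ - D))) * exp (-(r * (δ - D))) := by
    rw [← exp_add]; ring_nf
  rw [hδ, hkδ, hkr]
  field_simp

end ExponentialIntensity

/-- **Optimal quote shift for exponential intensities.** For `Λ(δ) = A e^{-kδ}`, the function
`δ ↦ (Λ(δ)/(ρz))(1 - e^{-ρz(δ-p)})` attains its supremum at the unique point
`δ* = p + (1/(ρz)) log(1 + ρz/k)`. -/
theorem exponential_intensity_optimal_shift
    (A k ρ z : ℝ) (hA : 0 < A) (hk : 0 < k) (hρ : 0 < ρ) (hz : 0 < z) (p : ℝ) :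
    (∀ δ : ℝ,
        A * Real.exp (-(k * δ)) / (ρ * z) * (1 - Real.exp (-(ρ * z * (δ - p)))) ≤
          A * Real.exp (-(k * (p + 1 / (ρ * z) * Real.log (1 + ρ * z / k)))) / (ρ * z) *
            (1 - Real.exp (-(ρ * z * ((p + 1 / (ρ * z) * Real.log (1 + ρ * z / k)) - p))))) ∧
    (∀ δ : ℝ,
        A * Real.exp (-(k * δ)) / (ρ * z) * (1 - Real.exp (-(ρ * z * (δ - p)))) =
          A * Real.exp (-(k * (p + 1 / (ρ * z) * Real.log (1 + ρ * z / k)))) / (ρ * z) *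
            (1 - Real.exp (-(ρ * z * ((p + 1 / (ρ * z) * Real.log (1 + ρ * z / k)) - p)))) →
        δ = p + 1 / (ρ * z) * Real.log (1 + ρ * z / k)) := by
  have hr : 0 < ρ * z := mul_pos hρ hz
  set D := p + 1 / (ρ * z) * log (1 + ρ * z / k)
  have hD : exp (-(ρ * z * (D - p))) = k / (k + ρ * z) := by
    simpa [D] using exp_neg_mul_one_div_mul_log hk hr
  have hC : 0 < A * exp (-(k * D)) / (ρ * z * (k + ρ * z)) := by positivity
  have hlt : ∀ δ, δ ≠ D →
      A * exp (-(k * δ)) / (ρ * z) * (1 - exp (-(ρ * z * (δ - p)))) <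
        A * exp (-(k * D)) / (ρ * z) * (1 - exp (-(ρ * z * (D - p)))) := by
    intro δ hδ
    rw [exp_intensity_objective_eq hk hr hD, exp_intensity_objective_eq hk hr hD]
    simpa using
      mul_lt_mul_of_pos_left (mul_exp_neg_sub_mul_exp_neg_lt hk hr (sub_ne_zero.mpr hδ)) hC
  refine ⟨fun δ => ?_, fun δ heq => ?_⟩
  · rcases eq_or_ne δ D with rfl | hδ
    · exact le_rfl
    · exact (hlt δ hδ).le
  · by_contra hδ
    exact (hlt δ hδ).ne heq
end

section
/- Let Λ : ℝ → (0,∞) be twice continuously differentiable with Λ′(δ) < 0 for all δ, lim_{δ→+∞} Λ(δ) = 0, and sup_{δ∈ℝ} Λ(δ)Λ″(δ)/Λ′(δ)² < 2. Then for every ρ > 0, z > 0 and p ∈ ℝ, the function f(δ) := (Λ(δ)/(ρz))·(1 − exp(−ρz(δ−p))) is bounded above on ℝ and attains its supremum at a unique point δ* ∈ ℝ. -/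
/-!
The objective is `≤ 0` for `δ ≤ p`, positive for `δ > p`, and tends to `0` at `+∞`, so by the
extreme value theorem it has a global maximum, which lies in `(p, ∞)`. Its derivative factors as
`Λ'(δ) e^{-k(δ-p)} / k · φ(δ)` with `φ(δ) = e^{k(δ-p)} - 1 + kΛ(δ)/Λ'(δ)` and `k = ρz`, so every
maximizer is a zero of `φ`. Since `(Λ/Λ')' = 1 - ΛΛ''/Λ'²`, the bound `ΛΛ''/Λ'² ≤ 2` gives
`φ' = k (e^{k(δ-p)} + 1 - ΛΛ''/Λ'²) > 0` on `(p, ∞)`, so `φ` has at most one zero there.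
-/

open Real Filter Set Topology

noncomputable section

namespace Hamiltonian

variable {Λ : ℝ → ℝ} {k p δ : ℝ}

/-- The objective `f`, written with `k = ρ z`. -/
def objective (Λ : ℝ → ℝ) (k p δ : ℝ) : ℝ :=
  Λ δ / k * (1 - exp (-(k * (δ - p))))

/-- The function `φ` of the first-order condition: `f' = Λ' e^{-k(δ-p)} / k · φ`. -/
def foc (Λ : ℝ → ℝ) (k p δ : ℝ) : ℝ :=
  exp (k * (δ - p)) - 1 + k * (Λ δ / deriv Λ δ)

theorem objective_nonpos (hΛ : 0 ≤ Λ δ) (hk : 0 ≤ k) (hδ : δ ≤ p) : objective Λ k p δ ≤ 0 := by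
  have : 1 ≤ exp (-(k * (δ - p))) := one_le_exp (by nlinarith)
  exact mul_nonpos_of_nonneg_of_nonpos (div_nonneg hΛ hk) (by linarith)

theorem objective_pos (hΛ : 0 < Λ δ) (hk : 0 < k) (hδ : p < δ) : 0 < objective Λ k p δ := by
  have : exp (-(k * (δ - p))) < 1 := exp_lt_one_iff.mpr (by nlinarith)
  exact mul_pos (div_pos hΛ hk) (by linarith)

theorem tendsto_objective_atTop {L : ℝ} (hΛ : Tendsto Λ atTop (𝓝 L)) (hk : 0 < k) :
    Tendsto (objective Λ k p) atTop (𝓝 (L / k)) := by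
  have hexp : Tendsto (fun δ => exp (-(k * (δ - p)))) atTop (𝓝 0) :=
    tendsto_exp_atBot.comp <| tendsto_neg_atTop_atBot.comp <|
      (tendsto_atTop_add_const_right _ (-p) tendsto_id).const_mul_atTop hk
  have hlim := (hΛ.div_const k).mul (hexp.const_sub 1)
  rwa [sub_zero, mul_one] at hlim

theorem exists_forall_objective_le (hΛc : Continuous Λ) (hΛpos : ∀ δ, 0 < Λ δ)
    (hΛlim : Tendsto Λ atTop (𝓝 0)) (hk : 0 < k) :
    ∃ δ₀, ∀ δ, objective Λ k p δ ≤ objective Λ k p δ₀ := by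
  have hpos : 0 < objective Λ k p (p + 1) := objective_pos (hΛpos _) hk (by linarith)
  have hcont : Continuous (objective Λ k p) := by unfold objective; fun_prop
  refine hcont.exists_forall_ge' (p + 1) ?_
  rw [cocompact_eq_atBot_atTop, eventually_sup]
  constructor
  · filter_upwards [eventually_le_atBot p] with δ hδ
    exact (objective_nonpos (hΛpos δ).le hk.le hδ).trans hpos.le
  · have hlim := tendsto_objective_atTop (p := p) hΛlim hk
    rw [zero_div] at hlim
    exact (hlim.eventually_lt_const hpos).mono fun _ h => h.le

theorem hasDerivAt_objective (hΛ : DifferentiableAt ℝ Λ δ) (hΛ' : deriv Λ δ ≠ 0) (hk : k ≠ 0) :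
    HasDerivAt (objective Λ k p) (deriv Λ δ * exp (-(k * (δ - p))) / k * foc Λ k p δ) δ := by
  have hexp : HasDerivAt (fun x => exp (-(k * (x - p)))) (exp (-(k * (δ - p))) * -(k * 1)) δ :=
    (((hasDerivAt_id δ).sub_const p).const_mul k).neg.exp
  refine ((hΛ.hasDerivAt.div_const k).mul (hexp.const_sub 1)).congr_deriv ?_
  have hinv : exp (-(k * (δ - p))) * exp (k * (δ - p)) = 1 := by rw [← exp_add]; simp
  unfold foc
  field_simp
  linear_combination -deriv Λ δ * hinv

theorem foc_eq_zero_of_isLocalMax (hmax : IsLocalMax (objective Λ k p) δ)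
    (hΛ : DifferentiableAt ℝ Λ δ) (hΛ' : deriv Λ δ ≠ 0) (hk : k ≠ 0) : foc Λ k p δ = 0 := by
  have hzero := hmax.hasDerivAt_eq_zero (hasDerivAt_objective hΛ hΛ' hk)
  exact (mul_eq_zero.mp hzero).resolve_left (div_ne_zero (mul_ne_zero hΛ' (exp_pos _).ne') hk)

theorem hasDerivAt_div_deriv {f : ℝ → ℝ} {x : ℝ} (hf : DifferentiableAt ℝ f x)
    (hf' : DifferentiableAt ℝ (deriv f) x) (hx : deriv f x ≠ 0) :
    HasDerivAt (fun y => f y / deriv f y) (1 - f x * deriv (deriv f) x / deriv f x ^ 2) x := by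
  refine (hf.hasDerivAt.div hf'.hasDerivAt hx).congr_deriv ?_
  field_simp

theorem hasDerivAt_foc (hΛ : DifferentiableAt ℝ Λ δ) (hΛ'' : DifferentiableAt ℝ (deriv Λ) δ)
    (hΛ' : deriv Λ δ ≠ 0) :
    HasDerivAt (foc Λ k p)
      (k * (exp (k * (δ - p)) + 1 - Λ δ * deriv (deriv Λ) δ / deriv Λ δ ^ 2)) δ := by
  have hexp : HasDerivAt (fun x => exp (k * (x - p))) (exp (k * (δ - p)) * (k * 1)) δ :=
    (((hasDerivAt_id δ).sub_const p).const_mul k).exp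
  have hquot := (hasDerivAt_div_deriv hΛ hΛ'' hΛ').const_mul k
  exact ((hexp.sub_const 1).add hquot).congr_deriv (by ring)

theorem strictMonoOn_foc (hΛ : Differentiable ℝ Λ) (hΛ'' : Differentiable ℝ (deriv Λ))
    (hΛ' : ∀ δ, deriv Λ δ ≠ 0) (hq : ∀ δ, Λ δ * deriv (deriv Λ) δ / deriv Λ δ ^ 2 ≤ 2)
    (hk : 0 < k) : StrictMonoOn (foc Λ k p) (Ici p) := by
  have hderiv δ := hasDerivAt_foc (k := k) (p := p) (hΛ δ) (hΛ'' δ) (hΛ' δ)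
  refine strictMonoOn_of_hasDerivWithinAt_pos (convex_Ici p)
    (fun δ _ => (hderiv δ).continuousAt.continuousWithinAt)
    (fun δ _ => (hderiv δ).hasDerivWithinAt) fun δ hδ => ?_
  rw [interior_Ici] at hδ
  have : 1 < exp (k * (δ - p)) := one_lt_exp_iff.mpr (mul_pos hk (sub_pos.mpr hδ))
  exact mul_pos hk (by linarith [hq δ])

end Hamiltonian

open Hamiltonian

/-- **Existence and uniqueness of the optimal quote.** If `Λ : ℝ → (0,∞)` is C², strictly
decreasing with `Λ' < 0`, `Λ(δ) → 0` as `δ → ∞`, and `sup_δ Λ(δ)Λ''(δ)/Λ'(δ)² < 2`, then for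
every `ρ, z > 0` and `p ∈ ℝ` the function `f(δ) = (Λ(δ)/(ρz))(1 - e^{-ρz(δ-p)})` is bounded
above and attains its supremum at a unique point. -/
theorem hamiltonian_sup_attained_unique
    (Λ : ℝ → ℝ) (hΛpos : ∀ δ, 0 < Λ δ)
    (hΛC2 : ContDiff ℝ 2 Λ)
    (hΛ' : ∀ δ, deriv Λ δ < 0)
    (hΛlim : Filter.Tendsto Λ Filter.atTop (nhds 0))
    (hΛsup : ∃ c : ℝ, c < 2 ∧ ∀ δ, Λ δ * deriv (deriv Λ) δ / (deriv Λ δ) ^ 2 ≤ c)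
    (ρ z : ℝ) (hρ : 0 < ρ) (hz : 0 < z) (p : ℝ) :
    BddAbove (Set.range fun δ : ℝ => Λ δ / (ρ * z) * (1 - Real.exp (-(ρ * z * (δ - p))))) ∧
    ∃! δstar : ℝ, ∀ δ : ℝ,
      Λ δ / (ρ * z) * (1 - Real.exp (-(ρ * z * (δ - p)))) ≤
        Λ δstar / (ρ * z) * (1 - Real.exp (-(ρ * z * (δstar - p)))) := by
  obtain ⟨c, hc, hq⟩ := hΛsup
  have hk : 0 < ρ * z := mul_pos hρ hz
  have hΛd : Differentiable ℝ Λ := hΛC2.differentiable two_ne_zero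
  have hne δ : deriv Λ δ ≠ 0 := (hΛ' δ).ne
  have maximizer_spec δ₁ (h : ∀ δ, objective Λ (ρ * z) p δ ≤ objective Λ (ρ * z) p δ₁) :
      δ₁ ∈ Ici p ∧ foc Λ (ρ * z) p δ₁ = 0 := by
    refine ⟨mem_Ici.2 <| le_of_not_ge fun hle => ?_,
      foc_eq_zero_of_isLocalMax (Eventually.of_forall h) (hΛd δ₁) (hne δ₁) hk.ne'⟩
    have hpos := objective_pos (p := p) (hΛpos (p + 1)) hk (lt_add_one p)
    linarith [h (p + 1), objective_nonpos (hΛpos δ₁).le hk.le hle]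
  have hinj := (strictMonoOn_foc hΛd hΛC2.differentiable_deriv_two hne
    (fun δ => (hq δ).trans hc.le) hk (p := p)).injOn
  obtain ⟨δ₀, hδ₀⟩ := exists_forall_objective_le (p := p) hΛd.continuous hΛpos hΛlim hk
  refine ⟨⟨_, forall_mem_range.2 hδ₀⟩, δ₀, hδ₀, fun δ₁ hδ₁ => ?_⟩
  obtain ⟨hmem₁, hfoc₁⟩ := maximizer_spec δ₁ hδ₁
  obtain ⟨hmem₀, hfoc₀⟩ := maximizer_spec δ₀ hδ₀
  exact hinj hmem₁ hmem₀ (hfoc₁.trans hfoc₀.symm)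
end
end

section
/- Let Λ : ℝ → (0,∞) be twice continuously differentiable with Λ′(δ) < 0 for all δ, lim_{δ→+∞} Λ(δ) = 0, and sup_{δ∈ℝ} Λ(δ)Λ″(δ)/Λ′(δ)² < 2, and fix ρ > 0 and z > 0. Define H(z,p) := sup_{δ∈ℝ} (Λ(δ)/(ρz))·(1 − exp(−ρz(δ−p))) for p ∈ ℝ. Then 0 < H(z,p) < ∞ for every p ∈ ℝ, and the function p ↦ H(z,p) is strictly decreasing on ℝ. -/
/-!
With `k = ρ z`, the gain `Λ δ / k * (1 - exp (-k (δ - p)))` is nonpositive for `δ ≤ p`, while for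
`δ > p` it is positive and bounded by `Λ δ / k`, which tends to `0`. A continuous function with
these properties attains its supremum, at some `δ⋆`. Since the gain at a fixed `δ` is strictly
decreasing in `p`, taking `δ⋆` the maximiser for `p₂ > p₁` gives
`H p₂ = gain_{p₂} δ⋆ < gain_{p₁} δ⋆ ≤ H p₁`.
-/

open Filter Set Topology

noncomputable section

namespace MarketMaking

def quoteGain (Λ : ℝ → ℝ) (k p δ : ℝ) : ℝ :=
  Λ δ / k * (1 - Real.exp (-(k * (δ - p))))

def hamiltonian (Λ : ℝ → ℝ) (k p : ℝ) : ℝ :=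
  sSup (range (quoteGain Λ k p))

variable {Λ : ℝ → ℝ} {k p δ : ℝ}

theorem quoteGain_nonpos (hΛ : 0 ≤ Λ δ) (hk : 0 ≤ k) (hδ : δ ≤ p) : quoteGain Λ k p δ ≤ 0 :=
  mul_nonpos_of_nonneg_of_nonpos (div_nonneg hΛ hk)
    (sub_nonpos.2 (Real.one_le_exp (by nlinarith)))

theorem quoteGain_pos (hΛ : 0 < Λ δ) (hk : 0 < k) (hδ : p < δ) : 0 < quoteGain Λ k p δ :=
  mul_pos (div_pos hΛ hk) (sub_pos.2 (Real.exp_lt_one_iff.2 (by nlinarith)))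

theorem quoteGain_le_div (hΛ : 0 ≤ Λ δ) (hk : 0 ≤ k) : quoteGain Λ k p δ ≤ Λ δ / k :=
  mul_le_of_le_one_right (div_nonneg hΛ hk) (by linarith [Real.exp_pos (-(k * (δ - p)))])

theorem strictAnti_quoteGain (hΛ : 0 < Λ δ) (hk : 0 < k) :
    StrictAnti fun p => quoteGain Λ k p δ := fun p₁ p₂ hp =>
  mul_lt_mul_of_pos_left (sub_lt_sub_left (Real.exp_lt_exp.2 (by nlinarith)) 1) (div_pos hΛ hk)

theorem continuous_quoteGain (hΛ : Continuous Λ) : Continuous (quoteGain Λ k p) := by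
  unfold quoteGain
  fun_prop

theorem exists_isGreatest_quoteGain (hΛc : Continuous Λ) (hΛpos : ∀ δ, 0 < Λ δ)
    (hΛlim : Tendsto Λ atTop (𝓝 0)) (hk : 0 < k) (p : ℝ) :
    ∃ δ, IsGreatest (range (quoteGain Λ k p)) (quoteGain Λ k p δ) := by
  have hpos : 0 < quoteGain Λ k p (p + 1) := quoteGain_pos (hΛpos _) hk (lt_add_one p)
  have hbot : ∀ᶠ δ in atBot, quoteGain Λ k p δ ≤ quoteGain Λ k p (p + 1) :=
    (eventually_le_atBot p).mono fun δ hδ =>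
      (quoteGain_nonpos (hΛpos δ).le hk.le hδ).trans hpos.le
  have htop : ∀ᶠ δ in atTop, quoteGain Λ k p δ ≤ quoteGain Λ k p (p + 1) := by
    have hdiv : Tendsto (fun δ => Λ δ / k) atTop (𝓝 0) := by
      simpa using hΛlim.div_const k
    exact (hdiv.eventually_lt_const hpos).mono fun δ hδ =>
      ((quoteGain_le_div (hΛpos δ).le hk.le).trans hδ.le)
  obtain ⟨δ, hδ⟩ := (continuous_quoteGain hΛc).exists_forall_ge' (p + 1)
    (by rw [cocompact_eq_atBot_atTop]; exact eventually_sup.2 ⟨hbot, htop⟩)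
  exact ⟨δ, mem_range_self δ, forall_mem_range.2 hδ⟩

theorem bddAbove_range_quoteGain (hΛc : Continuous Λ) (hΛpos : ∀ δ, 0 < Λ δ)
    (hΛlim : Tendsto Λ atTop (𝓝 0)) (hk : 0 < k) (p : ℝ) : BddAbove (range (quoteGain Λ k p)) :=
  let ⟨_, hδ⟩ := exists_isGreatest_quoteGain hΛc hΛpos hΛlim hk p
  hδ.bddAbove

theorem hamiltonian_pos (hΛc : Continuous Λ) (hΛpos : ∀ δ, 0 < Λ δ)
    (hΛlim : Tendsto Λ atTop (𝓝 0)) (hk : 0 < k) (p : ℝ) : 0 < hamiltonian Λ k p :=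
  (quoteGain_pos (hΛpos _) hk (lt_add_one p)).trans_le
    (le_csSup (bddAbove_range_quoteGain hΛc hΛpos hΛlim hk p) (mem_range_self _))

theorem strictAnti_hamiltonian (hΛc : Continuous Λ) (hΛpos : ∀ δ, 0 < Λ δ)
    (hΛlim : Tendsto Λ atTop (𝓝 0)) (hk : 0 < k) : StrictAnti (hamiltonian Λ k) := by
  intro p₁ p₂ hp
  obtain ⟨δ, hδ⟩ := exists_isGreatest_quoteGain hΛc hΛpos hΛlim hk p₂
  calc hamiltonian Λ k p₂ = quoteGain Λ k p₂ δ := hδ.csSup_eq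
    _ < quoteGain Λ k p₁ δ := strictAnti_quoteGain (hΛpos δ) hk hp
    _ ≤ hamiltonian Λ k p₁ :=
      le_csSup (bddAbove_range_quoteGain hΛc hΛpos hΛlim hk p₁) (mem_range_self δ)

end MarketMaking

end

open MarketMaking in
theorem hamiltonian_positive_finite_strictAnti_general
    (Λ : ℝ → ℝ) (hΛpos : ∀ δ, 0 < Λ δ)
    (hΛC2 : ContDiff ℝ 2 Λ)
    (hΛlim : Filter.Tendsto Λ Filter.atTop (nhds 0))
    (ρ z : ℝ) (hρ : 0 < ρ) (hz : 0 < z) :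
    (∀ p : ℝ,
      BddAbove (Set.range fun δ : ℝ => Λ δ / (ρ * z) * (1 - Real.exp (-(ρ * z * (δ - p))))) ∧
      0 < sSup (Set.range fun δ : ℝ =>
        Λ δ / (ρ * z) * (1 - Real.exp (-(ρ * z * (δ - p)))))) ∧
    StrictAnti (fun p : ℝ => sSup (Set.range fun δ : ℝ =>
      Λ δ / (ρ * z) * (1 - Real.exp (-(ρ * z * (δ - p)))))) :=
  have hΛc := hΛC2.continuous
  have hk := mul_pos hρ hz
  ⟨fun p => ⟨bddAbove_range_quoteGain hΛc hΛpos hΛlim hk p, hamiltonian_pos hΛc hΛpos hΛlim hk p⟩,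
    strictAnti_hamiltonian hΛc hΛpos hΛlim hk⟩

/-- **Properties of the market-making Hamiltonian.** If `Λ : ℝ → (0,∞)` is C², strictly
decreasing with `Λ' < 0`, `Λ(δ) → 0` as `δ → ∞`, and `sup_δ Λ(δ)Λ''(δ)/Λ'(δ)² < 2`, and
`ρ, z > 0`, then `H(z,p) = sup_δ (Λ(δ)/(ρz))(1 - e^{-ρz(δ-p)})` is finite and positive for
every `p`, and `p ↦ H(z,p)` is strictly decreasing. -/
theorem hamiltonian_positive_finite_strictAnti
    (Λ : ℝ → ℝ) (hΛpos : ∀ δ, 0 < Λ δ)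
    (hΛC2 : ContDiff ℝ 2 Λ)
    (hΛ' : ∀ δ, deriv Λ δ < 0)
    (hΛlim : Filter.Tendsto Λ Filter.atTop (nhds 0))
    (hΛsup : ∃ c : ℝ, c < 2 ∧ ∀ δ, Λ δ * deriv (deriv Λ) δ / (deriv Λ δ) ^ 2 ≤ c)
    (ρ z : ℝ) (hρ : 0 < ρ) (hz : 0 < z) :
    (∀ p : ℝ,
      BddAbove (Set.range fun δ : ℝ => Λ δ / (ρ * z) * (1 - Real.exp (-(ρ * z * (δ - p))))) ∧
      0 < sSup (Set.range fun δ : ℝ =>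
        Λ δ / (ρ * z) * (1 - Real.exp (-(ρ * z * (δ - p)))))) ∧
    StrictAnti (fun p : ℝ => sSup (Set.range fun δ : ℝ =>
      Λ δ / (ρ * z) * (1 - Real.exp (-(ρ * z * (δ - p)))))) :=
  hamiltonian_positive_finite_strictAnti_general Λ hΛpos hΛC2 hΛlim ρ z hρ hz
end
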